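/- The operator Y produces a q-shift of the parameter b when acting on the Pastro polynomials: for every nonnegative integer n and all real x, (x - a^{-1}q) P_n(qx; a, b; q) + (a^{-1}q - b^{-1}x) P_n(x; a, b; q) = -b^{-1} (1 - b q^n) x P_n(x; a, bq; q). -/

import Mathlib

/-- The q-Pochhammer symbol `(z;q)_k = ∏_{j=0}^{k-1} (1 - z q^j)`. -/
noncomputable def qPoch (q z : ℝ) (k : ℕ) : ℝ :=
  ∏ j ∈ Finset.range k, (1 - z * q ^ j)

/-- Coefficient `c_{n,k}` of the monic Pastro polynomial. -/
noncomputable def pastroCoeff (q a b : ℝ) (n k : ℕ) : ℝ :=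
  (qPoch q (a⁻¹ * b * q ^ (1 - (n : ℤ))) n * qPoch q q n /
      (qPoch q (q ^ (-(n : ℤ))) n * qPoch q b n)) *
    (qPoch q (q ^ (-(n : ℤ))) k * qPoch q b k /
      (qPoch q (a⁻¹ * b * q ^ (1 - (n : ℤ))) k * qPoch q q k))

/-- The monic Pastro polynomial `P_n(x;a,b;q)`. -/
noncomputable def pastroP (q a b : ℝ) (n : ℕ) (x : ℝ) : ℝ :=
  ∑ k ∈ Finset.range (n + 1), pastroCoeff q a b n k * x ^ k

/-!
`P_n(x;a,b;q)` is the terminating series `₂φ₁(q⁻ⁿ, b; a⁻¹bq¹⁻ⁿ; q, x)` divided by its leading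
coefficient. Both sides of the identity vanish at `x = 0`, and comparing the coefficients of
`x^(k+1)` reduces it to the two contiguity relations of the `₂φ₁` coefficients, `k ↦ k + 1` and
`(b, w) ↦ (bq, wq)`, followed by a polynomial identity in `q^k`. The top coefficient needs no
separate treatment because `c_{n,n+1} = 0`, the factor `1 - q⁻ⁿqⁿ` of `(q⁻ⁿ;q)_{n+1}` being zero.
-/

open Finset

theorem sum_range_succ_comp_succ_of_eq_zero {M : Type*} [AddCommMonoid M] (f : ℕ → M) (n : ℕ)
    (h0 : f 0 = 0) (hn : f (n + 1) = 0) :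
    ∑ k ∈ range (n + 1), f (k + 1) = ∑ k ∈ range (n + 1), f k := by
  rw [sum_range_succ, hn, add_zero, sum_range_succ', h0, add_zero]

section QPochhammer

theorem qPoch_succ (q z : ℝ) (k : ℕ) : qPoch q z (k + 1) = qPoch q z k * (1 - z * q ^ k) :=
  prod_range_succ _ _

theorem one_sub_mul_qPoch_mul (q z : ℝ) (k : ℕ) :
    (1 - z) * qPoch q (z * q) k = qPoch q z k * (1 - z * q ^ k) := by
  induction k with
  | zero => simp [qPoch]
  | succ k ih =>
    rw [qPoch_succ, qPoch_succ]
    linear_combination (1 - z * q * q ^ k) * ih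

variable {q : ℝ}

theorem one_sub_mul_pow_ne_zero {z : ℝ} (h : ∀ m : ℤ, z * q ^ m ≠ 1) (j : ℕ) :
    1 - z * q ^ j ≠ 0 :=
  sub_ne_zero.mpr (by exact_mod_cast (h j).symm)

theorem one_sub_mul_zpow_mul_pow_ne_zero {z : ℝ} (hq : q ≠ 0) (h : ∀ m : ℤ, z * q ^ m ≠ 1)
    (m : ℤ) (j : ℕ) : 1 - z * q ^ m * q ^ j ≠ 0 :=
  one_sub_mul_pow_ne_zero (fun m' => by rw [mul_assoc, ← zpow_add₀ hq]; exact h _) j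

theorem one_sub_self_mul_pow_ne_zero (hq1 : ∀ k : ℤ, k ≠ 0 → q ^ k ≠ 1) (j : ℕ) :
    1 - q * q ^ j ≠ 0 := by
  rw [← pow_succ']
  exact sub_ne_zero.mpr (by exact_mod_cast (hq1 (j + 1) (by omega)).symm)

theorem qPoch_ne_zero {z : ℝ} {k : ℕ} (h : ∀ j < k, 1 - z * q ^ j ≠ 0) : qPoch q z k ≠ 0 :=
  prod_ne_zero_iff.mpr fun j hj => h j (mem_range.mp hj)

theorem qPoch_zpow_neg_ne_zero (hq : q ≠ 0) (hq1 : ∀ k : ℤ, k ≠ 0 → q ^ k ≠ 1) (n : ℕ) :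
    qPoch q (q ^ (-(n : ℤ))) n ≠ 0 :=
  qPoch_ne_zero fun j hj => by
    rw [← zpow_natCast q j, ← zpow_add₀ hq]
    exact sub_ne_zero.mpr (hq1 _ (by omega)).symm

theorem qPoch_zpow_neg_succ (hq : q ≠ 0) (n : ℕ) : qPoch q (q ^ (-(n : ℤ))) (n + 1) = 0 := by
  rw [qPoch_succ, zpow_neg, zpow_natCast, inv_mul_cancel₀ (pow_ne_zero n hq), sub_self,
    mul_zero]

end QPochhammer

section Phi21

/-- The coefficient of `x ^ k` in the basic hypergeometric series `₂φ₁(u, b; w; q, x)`. -/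
noncomputable def phi21Coeff (q u b w : ℝ) (k : ℕ) : ℝ :=
  qPoch q u k * qPoch q b k / (qPoch q w k * qPoch q q k)

variable {q u b w : ℝ}

theorem phi21Coeff_succ_mul {k : ℕ} (hw : 1 - w * q ^ k ≠ 0) (hq : 1 - q * q ^ k ≠ 0) :
    phi21Coeff q u b w (k + 1) * ((1 - w * q ^ k) * (1 - q * q ^ k)) =
      phi21Coeff q u b w k * ((1 - u * q ^ k) * (1 - b * q ^ k)) := by
  simp only [phi21Coeff, qPoch_succ]
  rw [mul_mul_mul_comm (qPoch q w k), div_mul_eq_mul_div,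
    mul_div_mul_right _ _ (mul_ne_zero hw hq)]
  ring

theorem phi21Coeff_mul_q (hb : 1 - b ≠ 0) (hw : 1 - w ≠ 0) (k : ℕ) :
    phi21Coeff q u (b * q) (w * q) k =
      phi21Coeff q u b w k * ((1 - w) * (1 - b * q ^ k)) / ((1 - b) * (1 - w * q ^ k)) := by
  have hshift {z : ℝ} (hz : 1 - z ≠ 0) :
      qPoch q (z * q) k = qPoch q z k * (1 - z * q ^ k) / (1 - z) :=
    eq_div_of_mul_eq hz (by rw [mul_comm, one_sub_mul_qPoch_mul])
  rw [phi21Coeff, phi21Coeff, hshift hb, hshift hw]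
  simp only [div_eq_mul_inv, mul_inv, inv_inv]
  ring

end Phi21

section Pastro

theorem pastroCoeff_eq_inv_mul (q a b : ℝ) (n k : ℕ) :
    pastroCoeff q a b n k =
      (phi21Coeff q (q ^ (-(n : ℤ))) b (a⁻¹ * b * q ^ (1 - (n : ℤ))) n)⁻¹ *
        phi21Coeff q (q ^ (-(n : ℤ))) b (a⁻¹ * b * q ^ (1 - (n : ℤ))) k := by
  rw [phi21Coeff, phi21Coeff, inv_div]
  rfl

variable {q a b : ℝ}

theorem pastroCoeff_succ_self (hq : q ≠ 0) (n : ℕ) : pastroCoeff q a b n (n + 1) = 0 := by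
  rw [pastroCoeff_eq_inv_mul, phi21Coeff, phi21Coeff, qPoch_zpow_neg_succ hq, zero_mul,
    zero_div, mul_zero]

theorem pastroCoeff_succ_mul (hq : q ≠ 0) (hq1 : ∀ k : ℤ, k ≠ 0 → q ^ k ≠ 1)
    (habq : ∀ m : ℤ, a⁻¹ * b * q ^ m ≠ 1) (n k : ℕ) :
    pastroCoeff q a b n (k + 1) *
        ((1 - a⁻¹ * b * q ^ (1 - (n : ℤ)) * q ^ k) * (1 - q * q ^ k)) =
      pastroCoeff q a b n k * ((1 - q ^ (-(n : ℤ)) * q ^ k) * (1 - b * q ^ k)) := by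
  rw [pastroCoeff_eq_inv_mul, pastroCoeff_eq_inv_mul, mul_assoc (phi21Coeff _ _ _ _ n)⁻¹,
    mul_assoc (phi21Coeff _ _ _ _ n)⁻¹,
    phi21Coeff_succ_mul (one_sub_mul_zpow_mul_pow_ne_zero hq habq _ k)
      (one_sub_self_mul_pow_ne_zero hq1 k)]

theorem pastroCoeff_mul_q (hq : q ≠ 0) (hq1 : ∀ k : ℤ, k ≠ 0 → q ^ k ≠ 1)
    (hbq : ∀ m : ℤ, b * q ^ m ≠ 1) (habq : ∀ m : ℤ, a⁻¹ * b * q ^ m ≠ 1) (n k : ℕ) :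
    pastroCoeff q a (b * q) n k *
        ((1 - b * q ^ n) * (1 - a⁻¹ * b * q ^ (1 - (n : ℤ)) * q ^ k)) =
      pastroCoeff q a b n k * ((1 - a⁻¹ * b * q) * (1 - b * q ^ k)) := by
  have hwq : a⁻¹ * (b * q) * q ^ (1 - (n : ℤ)) = a⁻¹ * b * q ^ (1 - (n : ℤ)) * q := by ring
  have hwn : a⁻¹ * b * q ^ (1 - (n : ℤ)) * q ^ n = a⁻¹ * b * q := by
    rw [mul_assoc, ← zpow_natCast, ← zpow_add₀ hq, sub_add_cancel, zpow_one]
  have hb : 1 - b ≠ 0 := by simpa using one_sub_mul_pow_ne_zero hbq 0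
  have hw : 1 - a⁻¹ * b * q ^ (1 - (n : ℤ)) ≠ 0 := by
    simpa using one_sub_mul_zpow_mul_pow_ne_zero hq habq (1 - n) 0
  have hφ : phi21Coeff q (q ^ (-(n : ℤ))) b (a⁻¹ * b * q ^ (1 - (n : ℤ))) n ≠ 0 :=
    div_ne_zero
      (mul_ne_zero (qPoch_zpow_neg_ne_zero hq hq1 n)
        (qPoch_ne_zero fun j _ => one_sub_mul_pow_ne_zero hbq j))
      (mul_ne_zero (qPoch_ne_zero fun j _ => one_sub_mul_zpow_mul_pow_ne_zero hq habq _ j)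
        (qPoch_ne_zero fun j _ => one_sub_self_mul_pow_ne_zero hq1 j))
  have hwk := one_sub_mul_zpow_mul_pow_ne_zero hq habq (1 - n) k
  have hbn := one_sub_mul_pow_ne_zero hbq n
  have habq1 : 1 - a⁻¹ * b * q ≠ 0 := by simpa using one_sub_mul_pow_ne_zero habq 1
  rw [pastroCoeff_eq_inv_mul, pastroCoeff_eq_inv_mul, hwq, phi21Coeff_mul_q hb hw,
    phi21Coeff_mul_q hb hw, hwn]
  generalize a⁻¹ * b * q ^ (1 - (n : ℤ)) = w at *
  generalize a⁻¹ * b * q = v at *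
  field_simp

theorem pastroCoeff_contiguity (hq : q ≠ 0) (hq1 : ∀ k : ℤ, k ≠ 0 → q ^ k ≠ 1) (hb : b ≠ 0)
    (hbq : ∀ m : ℤ, b * q ^ m ≠ 1) (habq : ∀ m : ℤ, a⁻¹ * b * q ^ m ≠ 1) (n k : ℕ) :
    (q ^ k - b⁻¹) * pastroCoeff q a b n k +
        a⁻¹ * q * (1 - q ^ (k + 1)) * pastroCoeff q a b n (k + 1) =
      -b⁻¹ * (1 - b * q ^ n) * pastroCoeff q a (b * q) n k := by
  have hsucc := pastroCoeff_succ_mul hq hq1 habq n k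
  have hshift := pastroCoeff_mul_q hq hq1 hbq habq n k
  have hsplit : q ^ (1 - (n : ℤ)) = q * q ^ (-(n : ℤ)) := by
    rw [sub_eq_add_neg, zpow_add₀ hq, zpow_one]
  refine mul_left_cancel₀ (mul_ne_zero hb (one_sub_mul_zpow_mul_pow_ne_zero hq habq (1 - n) k)) ?_
  rw [hsplit] at hsucc hshift ⊢
  rw [pow_succ']
  -- what remains is `c_k` times `(q^k - b⁻¹)(1 - wq^k) + a⁻¹q(1 - q⁻ⁿq^k)(1 - bq^k)
  -- = -b⁻¹(1 - a⁻¹bq)(1 - bq^k)`, where `w = a⁻¹bq·q⁻ⁿ`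
  linear_combination b * a⁻¹ * q * hsucc + b * b⁻¹ * hshift +
    pastroCoeff q a b n k * ((1 - a⁻¹ * b * q) * (1 - b * q ^ k) -
      (1 - a⁻¹ * b * (q * q ^ (-(n : ℤ))) * q ^ k)) * mul_inv_cancel₀ hb

end Pastro

theorem pastro_Y_contiguity_general (q a b : ℝ) (hq : q ≠ 0) (hq1 : ∀ k : ℤ, k ≠ 0 → q ^ k ≠ 1)
    (hb : b ≠ 0)
    (hbq : ∀ m : ℤ, b * q ^ m ≠ 1) (habq : ∀ m : ℤ, a⁻¹ * b * q ^ m ≠ 1)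
    (n : ℕ) (x : ℝ) :
    (x - a⁻¹ * q) * pastroP q a b n (q * x) + (a⁻¹ * q - b⁻¹ * x) * pastroP q a b n x =
      -b⁻¹ * (1 - b * q ^ n) * x * pastroP q a (b * q) n x := by
  set c := pastroCoeff q a b n
  have hshift := sum_range_succ_comp_succ_of_eq_zero
    (fun k => a⁻¹ * q * (1 - q ^ k) * c k * x ^ k) n (by simp)
    (by simp only [c, pastroCoeff_succ_self hq, mul_zero, zero_mul])
  calc _ = ∑ k ∈ range (n + 1),
        ((q ^ k - b⁻¹) * c k * x ^ (k + 1) + a⁻¹ * q * (1 - q ^ k) * c k * x ^ k) := by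
        simp only [pastroP, mul_sum, ← sum_add_distrib, mul_pow]
        exact sum_congr rfl fun k _ => by ring
    _ = ∑ k ∈ range (n + 1),
        ((q ^ k - b⁻¹) * c k + a⁻¹ * q * (1 - q ^ (k + 1)) * c (k + 1)) * x ^ (k + 1) := by
        rw [sum_add_distrib, ← hshift, ← sum_add_distrib]
        exact sum_congr rfl fun k _ => by ring
    _ = _ := by
        simp only [c, pastroCoeff_contiguity hq hq1 hb hbq habq, pastroP, mul_sum]
        exact sum_congr rfl fun k _ => by ring

/-- The operator `Y` produces a q-shift of the parameter `b` on the Pastro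
polynomials: `Y P_n(x;a,b;q) = -b⁻¹(1 - b q^n) x P_n(x;a,bq;q)`. -/
theorem pastro_Y_contiguity (q a b : ℝ) (hq : q ≠ 0) (hq1 : ∀ k : ℤ, k ≠ 0 → q ^ k ≠ 1)
    (ha : a ≠ 0) (hb : b ≠ 0)
    (hbq : ∀ m : ℤ, b * q ^ m ≠ 1) (habq : ∀ m : ℤ, a⁻¹ * b * q ^ m ≠ 1)
    (n : ℕ) (x : ℝ) :
    (x - a⁻¹ * q) * pastroP q a b n (q * x) + (a⁻¹ * q - b⁻¹ * x) * pastroP q a b n x =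
      -b⁻¹ * (1 - b * q ^ n) * x * pastroP q a (b * q) n x :=
  pastro_Y_contiguity_general q a b hq hq1 hb hbq habq n x
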